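/- Let X be a normed space, let y : [0, ∞) → [0, ∞) be absolutely continuous, and let D₁, D₂ : [0,∞) → [0,∞) be integrable on compacts. Suppose there is C > 0 such that whenever y(t) ≤ 4ε² on an interval, one has (1/2) y'(t) + D₁(t) + D₂(t) ≤ 2Cε (D₁(t) + D₂(t)) a.e. on that interval. If ε < 1/(4C) and y(0) < 2ε², then y(t) ≤ y(0) < 2ε² for all t ≥ 0. -/

import Mathlib

open MeasureTheory Set

/-!
While `y ≤ 4ε²`, the hypothesis gives `(1/2) y' ≤ (2Cε - 1)(D₁ + D₂) ≤ 0` a.e., because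
`4Cε < 1`; hence `y` cannot increase on any interval where it stays below `4ε²`. A continuity
argument then shows that `y` never reaches `2ε²`: at the first time it did, `y` would have stayed
below `2ε² ≤ 4ε²` up to that time, hence below `y 0 < 2ε²`.
-/

theorem forall_lt_of_continuousOn_of_bootstrap {y : ℝ → ℝ} {b : ℝ}
    (hy : ContinuousOn y (Ici 0)) (h0 : y 0 < b)
    (hboot : ∀ u ≥ (0 : ℝ), (∀ s ∈ Icc 0 u, y s ≤ b) → y u < b) :
    ∀ t ≥ (0 : ℝ), y t < b := by
  by_contra! hexit
  set S := Ici 0 ∩ y ⁻¹' Ici b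
  have hS : IsClosed S := hy.preimage_isClosed_of_isClosed isClosed_Ici isClosed_Ici
  have hbdd : BddBelow S := ⟨0, fun s hs => hs.1⟩
  -- `T` is the first time at which `y` reaches `b`.
  set T := sInf S
  obtain ⟨t, ht0, hbt⟩ := hexit
  obtain ⟨hT0, hTb⟩ : T ∈ S := hS.csInf_mem ⟨t, ht0, hbt⟩ hbdd
  change b ≤ y T at hTb
  have hbefore : ∀ s ∈ Ico 0 T, y s < b := fun s hs =>
    not_le.1 fun h => (csInf_le hbdd ⟨hs.1, h⟩).not_gt hs.2
  have hTpos : 0 < T := hT0.lt_of_ne fun h => by rw [← h] at hTb; linarith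
  have hyT : y T ≤ b := by
    have hT : T ∈ closure (Ico 0 T) := by rw [closure_Ico hTpos.ne]; exact right_mem_Icc.2 hT0
    simpa [isClosed_Iic.closure_eq] using
      ((hy T hT0).mono Ico_subset_Ici_self).mem_closure (t := Iic b) hT
        fun s hs => (hbefore s hs).le
  have hupto : ∀ s ∈ Icc 0 T, y s ≤ b := fun s hs =>
    hs.2.eq_or_lt.elim (fun h => h ▸ hyT) fun h => (hbefore s ⟨hs.1, h⟩).le
  exact (hboot T hT0 hupto).not_ge hTb

theorem le_of_eq_add_integral_of_ae_nonpos {y y' : ℝ → ℝ} {a u : ℝ} (hau : a ≤ u)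
    (hftc : y u = y a + ∫ s in a..u, y' s)
    (hy' : ∀ᵐ s ∂volume.restrict (Icc a u), y' s ≤ 0) :
    y u ≤ y a := by
  have : 0 ≤ ∫ s in a..u, -y' s :=
    intervalIntegral.integral_nonneg_of_ae_restrict hau (hy'.mono fun s hs => by simpa using hs)
  rw [intervalIntegral.integral_neg] at this
  linarith

theorem stmt_13_general (y y' D₁ D₂ : ℝ → ℝ) (C ε : ℝ) (hC : 0 < C)
    (hy_cont : ContinuousOn y (Set.Ici (0:ℝ)))
    (hftc : ∀ t ≥ (0:ℝ), y t = y 0 + ∫ s in (0:ℝ)..t, y' s)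
    (hD₁_nonneg : ∀ t ≥ (0:ℝ), 0 ≤ D₁ t) (hD₂_nonneg : ∀ t ≥ (0:ℝ), 0 ≤ D₂ t)
    (hineq : ∀ᵐ t ∂(volume.restrict (Set.Ici (0:ℝ))),
      y t ≤ 4 * ε ^ 2 →
        (1 / 2) * y' t + D₁ t + D₂ t ≤ 2 * C * ε * (D₁ t + D₂ t))
    (hεC : ε < 1 / (4 * C)) (hy0 : y 0 < 2 * ε ^ 2) :
    ∀ t ≥ (0:ℝ), y t ≤ y 0 := by
  have hCε : 4 * C * ε < 1 := by rwa [lt_div_iff₀' (by positivity)] at hεC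
  have hdecay : ∀ᵐ t ∂volume.restrict (Ici 0), y t ≤ 4 * ε ^ 2 → y' t ≤ 0 := by
    filter_upwards [hineq, ae_restrict_mem measurableSet_Ici] with t ht ht0 hsmall
    nlinarith [ht hsmall, hD₁_nonneg t ht0, hD₂_nonneg t ht0]
  have hnonincr : ∀ u ≥ (0 : ℝ), (∀ s ∈ Icc 0 u, y s ≤ 4 * ε ^ 2) → y u ≤ y 0 := by
    intro u hu hsmall
    refine le_of_eq_add_integral_of_ae_nonpos hu (hftc u hu) ?_
    filter_upwards [ae_restrict_of_ae_restrict_of_subset Icc_subset_Ici_self hdecay,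
      ae_restrict_mem measurableSet_Icc] with s hs hs_mem
    exact hs (hsmall s hs_mem)
  have hε : 2 * ε ^ 2 ≤ 4 * ε ^ 2 := by nlinarith [sq_nonneg ε]
  have hbelow : ∀ t ≥ (0 : ℝ), y t < 2 * ε ^ 2 :=
    forall_lt_of_continuousOn_of_bootstrap hy_cont hy0 fun u hu hsmall =>
      (hnonincr u hu fun s hs => (hsmall s hs).trans hε).trans_lt hy0
  exact fun t ht => hnonincr t ht fun s hs => (hbelow s hs.1).le.trans hε

/-- Bootstrap argument: let `y : [0,∞) → [0,∞)` be continuous and absolutely continuous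
(with a.e. derivative `y'` and the fundamental theorem of calculus `y t = y 0 + ∫₀^t y'`),
and let `D₁, D₂ ≥ 0` be locally integrable. Suppose `C > 0` is such that, at (a.e.) any
time where `y ≤ 4ε²`, one has `(1/2) y' + D₁ + D₂ ≤ 2Cε(D₁ + D₂)`. If `ε < 1/(4C)` and
`y 0 < 2ε²`, then `y t ≤ y 0 < 2ε²` for all `t ≥ 0`. -/
theorem stmt_13 (y y' D₁ D₂ : ℝ → ℝ) (C ε : ℝ) (hC : 0 < C) (hε : 0 < ε)
    (hy_cont : ContinuousOn y (Set.Ici (0:ℝ)))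
    (hy_nonneg : ∀ t ≥ (0:ℝ), 0 ≤ y t)
    (hftc : ∀ t ≥ (0:ℝ), y t = y 0 + ∫ s in (0:ℝ)..t, y' s)
    (hy'_int : ∀ t ≥ (0:ℝ), IntervalIntegrable y' volume 0 t)
    (hD₁_nonneg : ∀ t ≥ (0:ℝ), 0 ≤ D₁ t) (hD₂_nonneg : ∀ t ≥ (0:ℝ), 0 ≤ D₂ t)
    (hD₁_int : ∀ t ≥ (0:ℝ), IntervalIntegrable D₁ volume 0 t)
    (hD₂_int : ∀ t ≥ (0:ℝ), IntervalIntegrable D₂ volume 0 t)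
    (hineq : ∀ᵐ t ∂(volume.restrict (Set.Ici (0:ℝ))),
      y t ≤ 4 * ε ^ 2 →
        (1 / 2) * y' t + D₁ t + D₂ t ≤ 2 * C * ε * (D₁ t + D₂ t))
    (hεC : ε < 1 / (4 * C)) (hy0 : y 0 < 2 * ε ^ 2) :
    ∀ t ≥ (0:ℝ), y t ≤ y 0 :=
  stmt_13_general y y' D₁ D₂ C ε hC hy_cont hftc hD₁_nonneg hD₂_nonneg hineq hεC hy0
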